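/- For m ≥ 2 and n ≥ 1, define p(n) = Σ_{j=0}^{⌊n/m⌋} (-1)^j·(n/(n-(m-1)j))·C(n-(m-1)j, j)·x^{n-mj}·s^j. Then p satisfies the recurrence p(n+m) = x·p(n+m-1) - s·p(n) for all n ≥ 0, with p(0) := m and p(i) = x^i for 1 ≤ i ≤ m-1. -/

import Mathlib

open MvPolynomial in
/-- `p(0) := m` and, for `n ≥ 1`,
`p(n) = Σ_{j=0}^{⌊n/m⌋} (-1)^j·(n/(n-(m-1)j))·C(n-(m-1)j, j)·x^{n-mj}·s^j`
(in `ℚ[x,s]`, with `x = X 0`, `s = X 1`). -/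
noncomputable def pSum (m : ℕ) (n : ℕ) : MvPolynomial (Fin 2) ℚ :=
  if n = 0 then (m : MvPolynomial (Fin 2) ℚ)
  else
    ∑ j ∈ Finset.range (n / m + 1),
      MvPolynomial.C ((-1 : ℚ) ^ j * ((n : ℚ) / ((n : ℚ) - ((m : ℚ) - 1) * (j : ℚ))) *
          (Nat.choose (n - (m - 1) * j) j : ℚ)) *
        X 0 ^ (n - m * j) * X (1 : Fin 2) ^ j

section Aux
open MvPolynomial


noncomputable def Qc (m n j : ℕ) : ℚ :=
  (-1 : ℚ) ^ j * ((n : ℚ) / ((n : ℚ) - ((m : ℚ) - 1) * (j : ℚ))) *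
    (Nat.choose (n - (m - 1) * j) j : ℚ)

lemma choose_zero_of_big {m n j : ℕ} (hm : 2 ≤ m) (h : n < m * j) :
    Nat.choose (n - (m - 1) * j) j = 0 := by
  apply Nat.choose_eq_zero_of_lt
  have hj : 1 ≤ j := by
    rcases Nat.eq_zero_or_pos j with rfl | h'
    · simp at h
    · exact h'
  have h1 : (m - 1) * j + j = m * j := by
    have hh : m - 1 + 1 = m := by omega
    calc (m-1)*j + j = ((m-1)+1)*j := by ring
    _ = m * j := by rw [hh]
  omega

lemma Qc_zero {m n j : ℕ} (hm : 2 ≤ m) (h : n < m * j) : Qc m n j = 0 := by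
  simp [Qc, choose_zero_of_big hm h]

lemma keyE (m k i : ℕ) (hm : 1 ≤ m) (hk : 1 ≤ k) :
    ((k + (m - 1) * (i + 1) : ℕ) : ℚ) / (k : ℚ) * (Nat.choose k (i + 1) : ℚ) =
      (Nat.choose k (i + 1) : ℚ) + ((m : ℚ) - 1) * (Nat.choose (k - 1) i : ℚ) := by
  obtain ⟨k', rfl⟩ : ∃ k', k = k' + 1 := ⟨k - 1, by omega⟩
  have h1 : (k' + 1) * Nat.choose k' i = Nat.choose (k' + 1) (i + 1) * (i + 1) :=
    Nat.add_one_mul_choose_eq k' i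
  have hk0 : ((k' : ℚ) + 1) ≠ 0 := by positivity
  have h1q : ((k' : ℚ) + 1) * (Nat.choose k' i : ℚ) =
      (Nat.choose (k' + 1) (i + 1) : ℚ) * ((i : ℚ) + 1) := by exact_mod_cast h1
  have hcast : ((k' + 1 + (m - 1) * (i + 1) : ℕ) : ℚ) =
      ((k' : ℚ) + 1) + ((m : ℚ) - 1) * ((i : ℚ) + 1) := by
    push_cast [Nat.cast_sub hm]
    ring
  rw [hcast, show k' + 1 - 1 = k' from rfl]
  field_simp
  push_cast
  linear_combination (1 - (m : ℚ)) * h1q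

lemma Qrec (m n j : ℕ) (hm : 2 ≤ m) (hn : 1 ≤ n) :
    Qc m (n + m) (j + 1) = Qc m (n + m - 1) (j + 1) - Qc m n j := by
  have hm1 : 1 ≤ m := by omega
  by_cases h : m * j ≤ n
  · -- in range
    rcases Nat.eq_zero_or_pos j with rfl | hj
    · -- j = 0 subcase
      have hn0 : (n : ℚ) ≠ 0 := Nat.cast_ne_zero.mpr (by omega)
      have i1 := keyE m (n + 1) 0 hm1 (by omega)
      have i2 := keyE m n 0 hm1 hn
      have n1 : n + 1 + (m - 1) * (0 + 1) = n + m := by omega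
      have n2 : n + (m - 1) * (0 + 1) = n + m - 1 := by omega
      rw [n1] at i1; rw [n2] at i2
      rw [show n + 1 - 1 = n from rfl] at i1
      have e1 : n + m - (m - 1) * (0 + 1) = n + 1 := by omega
      have e2 : n + m - 1 - (m - 1) * (0 + 1) = n := by omega
      have e3 : n - (m - 1) * 0 = n := by omega
      have d1 : (↑(n + m) : ℚ) - ((m : ℚ) - 1) * ((0 + 1 : ℕ) : ℚ) = ((n + 1 : ℕ) : ℚ) := by
        push_cast; ring
      have d2 : (↑(n + m - 1) : ℚ) - ((m : ℚ) - 1) * ((0 + 1 : ℕ) : ℚ) = (n : ℚ) := by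
        have : ((n + m - 1 : ℕ) : ℚ) = (n : ℚ) + (m : ℚ) - 1 := by
          push_cast [Nat.cast_sub (show 1 ≤ n + m by omega)]; ring
        rw [this]; push_cast; ring
      have d3 : (↑n : ℚ) - ((m : ℚ) - 1) * ((0 : ℕ) : ℚ) = (n : ℚ) := by push_cast; ring
      simp only [Qc, e1, e2, e3, d1, d2, d3]
      simp only [mul_assoc]
      rw [i1, i2, div_self hn0]
      simp only [zero_add, Nat.choose_one_right, Nat.choose_zero_right]
      push_cast
      ring
    · -- j ≥ 1 subcase
      obtain ⟨j', rfl⟩ : ∃ j', j = j' + 1 := ⟨j - 1, by omega⟩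
      have hp1 : (m - 1) * (j' + 1) + (j' + 1) = m * (j' + 1) := by
        have hh : m - 1 + 1 = m := by omega
        calc (m-1)*(j'+1) + (j'+1) = ((m-1)+1)*(j'+1) := by ring
        _ = m * (j'+1) := by rw [hh]
      set k := n - (m - 1) * (j' + 1) with hkdef
      have hp2 : (m - 1) * (j' + 1 + 1) = (m - 1) * (j' + 1) + (m - 1) := by ring
      have hk1 : 1 ≤ k := by omega
      have hkn : k + (m - 1) * (j' + 1) = n := by omega
      have e1 : n + m - (m - 1) * (j' + 1 + 1) = k + 1 := by omega
      have e2 : n + m - 1 - (m - 1) * (j' + 1 + 1) = k := by omega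
      -- the three keyE instances
      have i1 := keyE m (k + 1) (j' + 1) hm1 (by omega)
      have i2 := keyE m k (j' + 1) hm1 hk1
      have i3 := keyE m k j' hm1 hk1
      have n1 : k + 1 + (m - 1) * (j' + 1 + 1) = n + m := by omega
      have n2 : k + (m - 1) * (j' + 1 + 1) = n + m - 1 := by omega
      have n3 : k + (m - 1) * (j' + 1) = n := hkn
      rw [n1] at i1; rw [n2] at i2; rw [n3] at i3
      -- cast facts for denominators
      have hnq : (n : ℚ) = (k : ℚ) + ((m : ℚ) - 1) * ((j' : ℚ) + 1) := by
        rw [← n3]; push_cast [Nat.cast_sub hm1]; ring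
      have hk0 : (k : ℚ) ≠ 0 := Nat.cast_ne_zero.mpr (by omega)
      have d1 : (↑(n + m) : ℚ) - ((m : ℚ) - 1) * ((j' + 1 + 1 : ℕ) : ℚ) = ((k + 1 : ℕ) : ℚ) := by
        push_cast; rw [hnq]; ring
      have d2 : (↑(n + m - 1) : ℚ) - ((m : ℚ) - 1) * ((j' + 1 + 1 : ℕ) : ℚ) = (k : ℚ) := by
        have : ((n + m - 1 : ℕ) : ℚ) = (n : ℚ) + (m : ℚ) - 1 := by
          push_cast [Nat.cast_sub (show 1 ≤ n + m by omega)]; ring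
        rw [this, hnq]; push_cast; ring
      have d3 : (↑n : ℚ) - ((m : ℚ) - 1) * ((j' + 1 : ℕ) : ℚ) = (k : ℚ) := by
        rw [hnq]; push_cast; ring
      simp only [Qc, e1, e2, d1, d2, d3, ← hkdef]
      rw [show k + 1 - 1 = k from rfl] at i1
      -- Pascal
      have p1 : Nat.choose (k + 1) (j' + 1 + 1) =
          Nat.choose k (j' + 1) + Nat.choose k (j' + 1 + 1) := Nat.choose_succ_succ k (j' + 1)
      have p2 : Nat.choose k (j' + 1) = Nat.choose (k - 1) j' + Nat.choose (k - 1) (j' + 1) := by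
        conv_lhs => rw [show k = (k - 1) + 1 by omega]
        exact Nat.choose_succ_succ (k - 1) j'
      have p1q : (Nat.choose (k + 1) (j' + 1 + 1) : ℚ) =
          Nat.choose k (j' + 1) + Nat.choose k (j' + 1 + 1) := by exact_mod_cast p1
      have p2q : (Nat.choose k (j' + 1) : ℚ) =
          Nat.choose (k - 1) j' + Nat.choose (k - 1) (j' + 1) := by exact_mod_cast p2
      simp only [mul_assoc]
      rw [i1, i2, i3]
      rw [p1q, p2q]
      ring
  · push_neg at h
    have h1 : n + m < m * (j + 1) := by
      have : m * (j + 1) = m * j + m := by ring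
      omega
    rw [Qc_zero hm h1, Qc_zero hm (show n + m - 1 < m * (j + 1) by omega), Qc_zero hm h]
    ring

noncomputable def Tm (m n j : ℕ) : MvPolynomial (Fin 2) ℚ :=
  MvPolynomial.C (Qc m n j) * X 0 ^ (n - m * j) * X (1 : Fin 2) ^ j

lemma Qc_j0 {m n : ℕ} (hn : 1 ≤ n) : Qc m n 0 = 1 := by
  have hn0 : (n : ℚ) ≠ 0 := Nat.cast_ne_zero.mpr (by omega)
  simp [Qc, div_self hn0]

lemma Tm_j0 {m n : ℕ} (hn : 1 ≤ n) : Tm m n 0 = X 0 ^ n := by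
  simp [Tm, Qc_j0 hn]

lemma Trec (m n j : ℕ) (hm : 2 ≤ m) (hn : 1 ≤ n) :
    Tm m (n + m) (j + 1) = X 0 * Tm m (n + m - 1) (j + 1) - X (1 : Fin 2) * Tm m n j := by
  have hq := Qrec m n j hm hn
  have hmj1 : m * (j + 1) = m * j + m := by ring
  by_cases h : m * j < n
  · set e' := n - m * j - 1 with he'
    have e1 : n + m - m * (j + 1) = e' + 1 := by omega
    have e2 : n + m - 1 - m * (j + 1) = e' := by omega
    have e3 : n - m * j = e' + 1 := by omega
    rw [Tm, Tm, Tm, e1, e2, e3, hq, map_sub]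
    ring
  · have h2 : Qc m (n + m - 1) (j + 1) = 0 := Qc_zero hm (by omega)
    have e1 : n + m - m * (j + 1) = 0 := by omega
    have e3 : n - m * j = 0 := by omega
    rw [Tm, Tm, Tm, e1, e3, hq, h2, map_sub, map_zero]
    ring

lemma pSum_eq (m n M : ℕ) (hm : 2 ≤ m) (hn : 1 ≤ n) (hM : n / m + 1 ≤ M) :
    pSum m n = ∑ j ∈ Finset.range M, Tm m n j := by
  have h0 : pSum m n = ∑ j ∈ Finset.range (n / m + 1), Tm m n j := by
    rw [pSum, if_neg (by omega)]; rfl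
  rw [h0]
  refine Finset.sum_subset (Finset.range_subset_range.mpr hM) ?_
  intro j _ hjn
  have hj : n / m < j := by
    simp only [Finset.mem_range] at hjn; omega
  have : n < m * j := by
    have h2 := (Nat.div_lt_iff_lt_mul (show 0 < m by omega)).mp hj
    rwa [mul_comm] at h2
  simp [Tm, Qc_zero hm this]

end Aux

open MvPolynomial in
theorem pSum_initial_and_recurrence (m : ℕ) (hm : 2 ≤ m) :
    (∀ i, 1 ≤ i → i ≤ m - 1 → pSum m i = X 0 ^ i) ∧
      ∀ n, pSum m (n + m) = X 0 * pSum m (n + m - 1) - X (1 : Fin 2) * pSum m n := by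
  have hinit : ∀ i, 1 ≤ i → i ≤ m - 1 → pSum m i = X 0 ^ i := by
    intro i h1 h2
    have him : i < m := by omega
    have h0 : pSum m i = ∑ j ∈ Finset.range (i / m + 1), Tm m i j := by
      rw [pSum, if_neg (by omega)]; rfl
    rw [h0, Nat.div_eq_of_lt him, Finset.sum_range_one, Tm_j0 h1]
  refine ⟨hinit, ?_⟩
  intro n
  rcases Nat.eq_zero_or_pos n with rfl | hn
  · -- base case n = 0 : pSum m m = X 0 * pSum m (m-1) - X 1 * m
    simp only [Nat.zero_add]
    have hm1 : pSum m (m - 1) = X 0 ^ (m - 1) := hinit (m - 1) (by omega) le_rfl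
    have h0 : pSum m m = ∑ j ∈ Finset.range (m / m + 1), Tm m m j := by
      rw [pSum, if_neg (by omega)]; rfl
    rw [h0, Nat.div_self (show 0 < m by omega), Finset.sum_range_succ, Finset.sum_range_one,
      Tm_j0 (show 1 ≤ m by omega), hm1]
    have hpS0 : pSum m 0 = (m : MvPolynomial (Fin 2) ℚ) := by rw [pSum, if_pos rfl]
    rw [hpS0]
    have ht1 : Tm m m 1 = MvPolynomial.C (-(m : ℚ)) * X (1 : Fin 2) := by
      have e1 : m - (m - 1) * 1 = 1 := by omega
      have e2 : m - m * 1 = 0 := by omega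
      have d1 : (m : ℚ) - ((m : ℚ) - 1) * ((1 : ℕ) : ℚ) = 1 := by push_cast; ring
      rw [Tm, Qc, e1, e2, d1, Nat.choose_self]
      simp
    rw [ht1]
    have hx : (X (0 : Fin 2) : MvPolynomial (Fin 2) ℚ) ^ m = X (0 : Fin 2) * X (0 : Fin 2) ^ (m - 1) := by
      conv_lhs => rw [show m = (m - 1) + 1 by omega]
      rw [pow_succ]; ring
    rw [hx]
    have hc : (m : MvPolynomial (Fin 2) ℚ) = MvPolynomial.C (m : ℚ) := by
      simp [map_natCast]
    rw [hc, show MvPolynomial.C (-(m : ℚ)) = -MvPolynomial.C (m : ℚ) from map_neg _ _]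
    ring
  · -- n ≥ 1
    have hdiv1 : (n + m) / m + 1 ≤ n + 2 := by
      rw [Nat.add_div_right n (show 0 < m by omega)]
      have := Nat.div_le_self n m
      omega
    have hdiv2 : (n + m - 1) / m + 1 ≤ n + 2 := by
      have h1 : (n + m - 1) / m ≤ (n + m) / m := Nat.div_le_div_right (by omega)
      rw [Nat.add_div_right n (show 0 < m by omega)] at h1
      have := Nat.div_le_self n m
      omega
    have hdiv3 : n / m + 1 ≤ n + 1 := by
      have := Nat.div_le_self n m
      omega
    rw [pSum_eq m (n + m) (n + 2) hm (by omega) hdiv1,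
      pSum_eq m (n + m - 1) (n + 2) hm (by omega) hdiv2,
      pSum_eq m n (n + 1) hm hn hdiv3]
    rw [Finset.sum_range_succ' (fun j => Tm m (n + m) j) (n + 1),
      Finset.sum_range_succ' (fun j => Tm m (n + m - 1) j) (n + 1)]
    have hkey : ∀ j ∈ Finset.range (n + 1),
        Tm m (n + m) (j + 1) = X 0 * Tm m (n + m - 1) (j + 1) - X (1 : Fin 2) * Tm m n j :=
      fun j _ => Trec m n j hm hn
    rw [Finset.sum_congr rfl hkey, Finset.sum_sub_distrib,
      Tm_j0 (show 1 ≤ n + m by omega), Tm_j0 (show 1 ≤ n + m - 1 by omega)]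
    have hx : (X (0 : Fin 2) : MvPolynomial (Fin 2) ℚ) ^ (n + m) = X (0 : Fin 2) * X (0 : Fin 2) ^ (n + m - 1) := by
      conv_lhs => rw [show n + m = (n + m - 1) + 1 by omega]
      rw [pow_succ]; ring
    rw [hx, mul_add, Finset.mul_sum, Finset.mul_sum]
    ring
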